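/- arXiv:2602.07545 — 5 statements merged into one kernel-verified Lean document; each statement's English description precedes it below -/
import Mathlib

section
/- Let R be a commutative ring and let ρ, m ∈ R be such that for every unit r of R/(m) we have r + ρr ≢ 0 (mod m). Then there exists a function c from the units of R/(m) to Fin 3 (a 3-coloring of the group of units of R/(m)) such that whenever a and b are units with c(a) = c(b), we have a + ρ·b ≢ 0 (mod m). -/
lemma chi_exists (k : ℕ) : ∃ χ : ZMod (k+2) → Fin 3, ∀ y, χ (y + 1) ≠ χ y := by
  haveI : Fact (1 < k + 2) := ⟨by omega⟩
  refine ⟨fun y => if y = -1 then 2 else if Even y.val then 0 else 1, fun y => ?_⟩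
  by_cases h1 : y = -1
  · have h0' : y + 1 = 0 := by rw [h1]; ring
    rw [h0', h1]
    have h0 : (0 : ZMod (k+2)) ≠ -1 := by
      intro hc
      have : ((-1 : ZMod (k+2))).val = 0 := by rw [← hc, ZMod.val_zero]
      rw [show (k+2) = (k+1)+1 from rfl, ZMod.val_neg_one] at this
      omega
    simp [h0]
  · have hval : y.val ≠ k + 1 := by
      intro hc
      apply h1
      have : y.val = ((-1 : ZMod (k+2))).val := by
        rw [hc, show (k+2) = (k+1)+1 from rfl, ZMod.val_neg_one]
      exact ZMod.val_injective _ this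
    have hlt : y.val + (1 : ZMod (k+2)).val < k + 2 := by
      rw [ZMod.val_one]
      have := y.val_lt
      omega
    have hv1 : (y + 1).val = y.val + 1 := by
      rw [ZMod.val_add_of_lt hlt, ZMod.val_one]
    by_cases h2 : y + 1 = -1
    · simp only [h2, h1, if_true, if_false]
      split <;> decide
    · simp only [h1, h2, if_false, hv1, Nat.even_add_one]
      split <;> simp_all

lemma key_coloring {G : Type*} [CommGroup G] (g : G) (hg : g ≠ 1) :
    ∃ c : G → Fin 3, ∀ x : G, c (g * x) ≠ c x := by
  set H := Subgroup.zpowers g with hH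
  have hmem : ∀ x : G, ∃ kk : ℤ, g ^ kk = x * ((QuotientGroup.mk (s := H) x).out)⁻¹ := by
    intro x
    rw [← Subgroup.mem_zpowers_iff]
    have h1 : QuotientGroup.mk (s := H) ((QuotientGroup.mk (s := H) x).out) =
        QuotientGroup.mk (s := H) x := Quotient.out_eq _
    have h2 := (QuotientGroup.eq (s := H)).mp h1
    have : ((QuotientGroup.mk (s := H) x).out)⁻¹ * x ∈ H := h2
    rwa [mul_comm] at this
  choose k hk using hmem
  have hstep : ∀ x : G, g ^ (k (g * x)) = g ^ (k x + 1) := by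
    intro x
    have hrep : (QuotientGroup.mk (s := H) (g * x)).out = (QuotientGroup.mk (s := H) x).out := by
      congr 1
      rw [QuotientGroup.eq]
      have : (g * x)⁻¹ * x = g⁻¹ := by
        rw [mul_inv_rev, mul_assoc, mul_comm g⁻¹ x, ← mul_assoc, inv_mul_cancel, one_mul]
      rw [this]
      exact inv_mem (Subgroup.mem_zpowers g)
    rw [hk (g * x), hrep, zpow_add_one, hk x]
    rw [mul_comm (x * _) g, mul_assoc]
  rcases hn : orderOf g with _ | _ | j
  · -- infinite order
    have hinj : ∀ x : G, k (g * x) = k x + 1 := by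
      intro x
      have := (zpow_eq_zpow_iff_modEq).mp (hstep x)
      rw [hn] at this
      simpa [Int.ModEq, Int.emod_zero] using this
    refine ⟨fun x => if Even (k x) then 0 else 1, fun x => ?_⟩
    dsimp only
    rw [hinj x]
    rcases Int.even_or_odd (k x) with he | ho
    · have : ¬ Even (k x + 1) := by simpa [Int.even_add_one] using he
      simp [he, this]
    · have h2 : ¬ Even (k x) := Int.not_even_iff_odd.mpr ho
      have : Even (k x + 1) := by simpa [Int.even_add_one] using h2
      simp [h2, this]
  · exact absurd (orderOf_eq_one_iff.mp hn) hg
  · -- finite order j+2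
    obtain ⟨χ, hχ⟩ := chi_exists j
    refine ⟨fun x => χ ((k x : ZMod (j + 2))), fun x => ?_⟩
    dsimp only
    have hmod : ((k (g * x) : ℤ) : ZMod (j + 2)) = ((k x + 1 : ℤ) : ZMod (j + 2)) := by
      rw [ZMod.intCast_eq_intCast_iff]
      have := (zpow_eq_zpow_iff_modEq).mp (hstep x)
      rwa [hn] at this
    rw [hmod]
    push_cast
    exact hχ _

theorem stmt_5 (R : Type*) [CommRing R] (ρ m : R)
    (h : ∀ r : (R ⧸ Ideal.span {m})ˣ,
      (r : R ⧸ Ideal.span {m}) + Ideal.Quotient.mk (Ideal.span {m}) ρ * r ≠ 0) :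
    ∃ c : (R ⧸ Ideal.span {m})ˣ → Fin 3,
      ∀ a b : (R ⧸ Ideal.span {m})ˣ, c a = c b →
        (a : R ⧸ Ideal.span {m}) + Ideal.Quotient.mk (Ideal.span {m}) ρ * b ≠ 0 := by
  set Q := R ⧸ Ideal.span {m}
  set ρ' : Q := Ideal.Quotient.mk (Ideal.span {m}) ρ with hρ'
  by_cases hu : IsUnit ρ'
  · obtain ⟨u, hu⟩ := hu
    have hg : (-u : Qˣ) ≠ 1 := by
      intro hc
      apply h 1
      have : ((-u : Qˣ) : Q) = 1 := by rw [hc]; rfl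
      have h2 : ρ' = -1 := by
        rw [← hu]
        rw [Units.val_neg] at this
        rw [← neg_eq_iff_eq_neg]
        exact this
      rw [h2]
      simp
    obtain ⟨c, hc⟩ := key_coloring (-u : Qˣ) hg
    refine ⟨c, fun a b hab heq => ?_⟩
    have ha : a = (-u) * b := by
      apply Units.ext
      rw [Units.val_mul, Units.val_neg, hu]
      rw [add_eq_zero_iff_eq_neg] at heq
      rw [heq]
      ring
    exact hc b (ha ▸ hab)
  · refine ⟨fun _ => 0, fun a b _ heq => ?_⟩
    apply hu
    have : ρ' = (-a : Qˣ) * ((b⁻¹ : Qˣ) : Q) := by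
      rw [add_eq_zero_iff_neg_eq] at heq
      rw [Units.val_neg, heq]
      rw [mul_assoc, Units.mul_inv, mul_one]
    rw [this]
    exact (IsUnit.neg a.isUnit).mul (Units.isUnit b⁻¹)
end

section
/- Let 𝒜 ⊆ ℤ[ω] be a finite set of Eisenstein integers, and let π be an Eisenstein prime with odd norm. Then there exists a subset ℬ ⊆ 𝒜 with |ℬ| ≥ |𝒜|/2 such that for all a, b ∈ ℬ and all natural numbers α: π^α divides a + b if and only if π^α divides both a and b. -/
/-!
Write `a = π ^ γ * a₀` with `π ∤ a₀`. If `a₀ + b₀ ≢ 0 (mod π)`, then `π ^ α ∣ a + b` forces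
`π ^ α ∣ a` and `π ^ α ∣ b`: by induction on `α`, write `a = π ^ α * a'`, `b = π ^ α * b'` with
`π ∣ a' + b'`; if `π ∤ a'` then `a'`, `b'` are the π-free parts of `a`, `b`, with sum `≡ 0`.
Since `π ∤ 2`, the nonzero residues mod `π` split as `S ⊔ -S`, and the elements of `𝒜` whose
π-free part lies in `S`, resp. outside `S`, give two such subsets covering `𝒜`. For an Eisenstein
prime, `π ∤ 2` holds because `π * conj π = N(π)` is odd.
-/

noncomputable def ω : ℂ := (-1 + Complex.I * Real.sqrt 3) / 2

noncomputable def E : Subring ℂ := Subring.closure {ω}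

section PiFreePart

variable {R : Type*} [CommRing R]

/-- Since `π ^ k * c` with `π ∤ c` determines `c` (for `π ≠ 0`), this says that the residue of the
π-free part of `a` lies in `S`; it holds vacuously when `a` has no π-free part, e.g. `a = 0`. -/
def FreePartResidueIn (π : R) (S : Set (R ⧸ Ideal.span {π})) (a : R) : Prop :=
  ∀ k c, a = π ^ k * c → ¬π ∣ c → Ideal.Quotient.mk (Ideal.span {π}) c ∈ S

variable [IsDomain R] {π : R}

theorem eq_of_pow_mul_eq_pow_mul_of_not_dvd (hπ : π ≠ 0) {k j : ℕ} {c d : R}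
    (hc : ¬π ∣ c) (hd : ¬π ∣ d) (h : π ^ k * c = π ^ j * d) : c = d := by
  wlog hkj : k ≤ j generalizing k j c d
  · exact (this hd hc h.symm (by omega)).symm
  obtain ⟨m, rfl⟩ := Nat.exists_eq_add_of_le hkj
  have hcd : c = π ^ m * d := by
    rw [pow_add, mul_assoc] at h
    exact mul_left_cancel₀ (pow_ne_zero k hπ) h
  rcases m with _ | m
  · simpa using hcd
  · exact absurd (hcd ▸ (dvd_pow_self π m.succ_ne_zero).mul_right d) hc

theorem freePartResidueIn_or_compl (hπ : π ≠ 0) (S : Set (R ⧸ Ideal.span {π})) (a : R) :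
    FreePartResidueIn π S a ∨ FreePartResidueIn π Sᶜ a := by
  refine or_iff_not_imp_left.mpr fun h j d hd_eq hd hdS => h fun k c hc_eq hc => ?_
  rwa [eq_of_pow_mul_eq_pow_mul_of_not_dvd hπ hc hd (hc_eq.symm.trans hd_eq)]

theorem pow_dvd_add_iff_of_freePartResidueIn (hπ : π ≠ 0) {S : Set (R ⧸ Ideal.span {π})}
    (hS : ∀ x ∈ S, x ≠ 0 → -x ∉ S) {a b : R}
    (ha : FreePartResidueIn π S a) (hb : FreePartResidueIn π S b) (α : ℕ) :
    π ^ α ∣ a + b ↔ π ^ α ∣ a ∧ π ^ α ∣ b := by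
  refine ⟨fun hab => ?_, fun ⟨ha, hb⟩ => dvd_add ha hb⟩
  induction α with
  | zero => simp
  | succ α ih =>
    obtain ⟨⟨a', rfl⟩, ⟨b', rfl⟩⟩ := ih ((pow_dvd_pow π α.le_succ).trans hab)
    have hsum : π ∣ a' + b' := by
      rwa [← mul_add, pow_succ, mul_dvd_mul_iff_left (pow_ne_zero α hπ)] at hab
    suffices π ∣ a' by
      rw [pow_succ]
      exact ⟨mul_dvd_mul_left _ this, mul_dvd_mul_left _ ((dvd_add_right this).mp hsum)⟩
    by_contra ha'
    have hb' : ¬π ∣ b' := fun hb' => ha' ((dvd_add_left hb').mp hsum)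
    have hneg : Ideal.Quotient.mk (Ideal.span {π}) b' = -Ideal.Quotient.mk (Ideal.span {π}) a' := by
      rw [eq_neg_iff_add_eq_zero, add_comm, ← map_add, Ideal.Quotient.eq_zero_iff_mem,
        Ideal.mem_span_singleton]
      exact hsum
    refine hS _ (ha α a' rfl ha') ?_ (hneg ▸ hb α b' rfl hb')
    rwa [Ne, Ideal.Quotient.eq_zero_iff_mem, Ideal.mem_span_singleton]

end PiFreePart

theorem exists_set_mem_iff_neg_notMem {G : Type*} [AddGroup G] (h : ∀ x : G, -x = x → x = 0) :
    ∃ S : Set G, ∀ x ≠ 0, x ∈ S ↔ -x ∉ S := by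
  let := IsWellOrder.linearOrder (WellOrderingRel (α := G))
  refine ⟨{x | x < -x}, fun x hx => ?_⟩
  simp only [Set.mem_ofPred_eq, neg_neg, not_lt]
  exact ⟨le_of_lt, fun hle => lt_of_le_of_ne hle fun he => hx (h x he.symm)⟩

theorem Finset.card_le_two_mul_card_filter_or {α : Type*} (A : Finset α) (p q : α → Prop)
    [DecidablePred p] [DecidablePred q] (h : ∀ a ∈ A, p a ∨ q a) :
    A.card ≤ 2 * (A.filter p).card ∨ A.card ≤ 2 * (A.filter q).card := by
  classical
  have hcover : A ⊆ A.filter p ∪ A.filter q := fun a ha => by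
    simpa [Finset.mem_union, Finset.mem_filter, ha] using h a ha
  have := (Finset.card_le_card hcover).trans (Finset.card_union_le _ _)
  omega

theorem Prime.exists_subset_card_le_two_mul_pow_dvd_add_iff {R : Type*} [CommRing R] [IsDomain R]
    {π : R} (hπ : Prime π) (h2 : ¬π ∣ 2) (A : Finset R) :
    ∃ B ⊆ A, A.card ≤ 2 * B.card ∧
      ∀ a ∈ B, ∀ b ∈ B, ∀ α : ℕ, π ^ α ∣ a + b ↔ π ^ α ∣ a ∧ π ^ α ∣ b := by
  classical
  have hprime : (Ideal.span {π}).IsPrime := (Ideal.span_singleton_prime hπ.ne_zero).mpr hπ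
  have h2Q : (2 : R ⧸ Ideal.span {π}) ≠ 0 := by
    rwa [← map_ofNat (Ideal.Quotient.mk _), Ne, Ideal.Quotient.eq_zero_iff_mem,
      Ideal.mem_span_singleton]
  obtain ⟨S, hS⟩ := exists_set_mem_iff_neg_notMem (G := R ⧸ Ideal.span {π}) fun x hx => by
    have h2x : 2 * x = 0 := by rw [two_mul]; nth_rewrite 1 [← hx]; exact neg_add_cancel x
    exact (mul_eq_zero.mp h2x).resolve_left h2Q
  rcases A.card_le_two_mul_card_filter_or _ _
      fun a _ => freePartResidueIn_or_compl hπ.ne_zero S a with hcard | hcard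
  · refine ⟨_, A.filter_subset _, hcard, fun a ha b hb => ?_⟩
    exact pow_dvd_add_iff_of_freePartResidueIn hπ.ne_zero (fun x hx h0 => (hS x h0).mp hx)
      (A.mem_filter.mp ha).2 (A.mem_filter.mp hb).2
  · refine ⟨_, A.filter_subset _, hcard, fun a ha b hb => ?_⟩
    exact pow_dvd_add_iff_of_freePartResidueIn hπ.ne_zero
      (fun x hx h0 hx' => absurd ((hS x h0).mpr hx') hx)
      (A.mem_filter.mp ha).2 (A.mem_filter.mp hb).2

theorem conj_omega : starRingEnd ℂ ω = -1 - ω := by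
  unfold ω
  simp only [map_div₀, map_add, map_mul, Complex.conj_I, map_neg, map_one, Complex.conj_ofReal,
    map_ofNat]
  ring

theorem E.conj_mem {z : ℂ} (hz : z ∈ E) : starRingEnd ℂ z ∈ E := by
  have hle : E ≤ E.comap (starRingEnd ℂ) := Subring.closure_le.mpr fun _ hz => by
    rw [Set.mem_singleton_iff.mp hz, SetLike.mem_coe, Subring.mem_comap, conj_omega]
    exact sub_mem (neg_mem (one_mem E)) (Subring.subset_closure rfl)
  exact hle hz

theorem E.not_dvd_two_of_odd_normSq {π : E} (hπ : ¬IsUnit π)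
    (hodd : ∃ n : ℤ, Odd n ∧ Complex.normSq (π : ℂ) = (n : ℝ)) : ¬π ∣ 2 := by
  obtain ⟨n, ⟨k, rfl⟩, hn⟩ := hodd
  let π' : E := ⟨starRingEnd ℂ π, E.conj_mem π.2⟩
  have hnorm : π * π' = 2 * k + 1 := Subtype.ext <| by
    simp only [Subring.coe_mul, Complex.mul_conj, hn, π']
    push_cast
    rfl
  intro h2
  refine hπ (isUnit_of_dvd_one ?_)
  have hone : (1 : E) = π * π' - 2 * k := by rw [hnorm]; ring
  rw [hone]
  exact dvd_sub (dvd_mul_right π π') (h2.mul_right _)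

theorem stmt_10 (𝒜 : Finset E) (π : E) (hπ : Prime π)
    (hodd : ∃ n : ℤ, Odd n ∧ Complex.normSq (π : ℂ) = (n : ℝ)) :
    ∃ ℬ ⊆ 𝒜, (𝒜.card : ℝ) / 2 ≤ (ℬ.card : ℝ) ∧
      ∀ a ∈ ℬ, ∀ b ∈ ℬ, ∀ α : ℕ,
        (π ^ α ∣ a + b ↔ (π ^ α ∣ a ∧ π ^ α ∣ b)) := by
  obtain ⟨ℬ, hsub, hcard, hgood⟩ := hπ.exists_subset_card_le_two_mul_pow_dvd_add_iff
    (E.not_dvd_two_of_odd_normSq hπ.not_isUnit hodd) 𝒜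
  refine ⟨ℬ, hsub, ?_, hgood⟩
  have : (𝒜.card : ℝ) ≤ 2 * ℬ.card := by exact_mod_cast hcard
  linarith
end

section
/- If 𝒜 ⊆ ℤ⁺ is a finite nonempty set, then the number of distinct rational primes dividing ∏_{a,b ∈ 𝒜, a ≠ b} (a² − ab + b²) is strictly greater than (log|𝒜| − log 38)/(2·log 3). -/
/-! For a prime `q`, colour `(ZMod q)ˣ` with two colours so that `x, y` with
`x² - xy + y² = 0` always get different colours. Such pairs satisfy `x = ζy` or `y = ζx`
for a root `ζ` of `z² - z + 1`; as `ζ³ = -1`, `ζ` has even order when `q ≠ 2`, so colouring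
by the parity of the exponent of `ζ` inside each coset of `⟨ζ⟩` works.
Colour `a ∈ 𝒜` at each prime `q` dividing the product by the colour of its `q`-free part.
For `a ≠ b` write `a = g a'`, `b = g b'` with `a', b'` coprime: a prime `q ∣ a'² - a'b' + b'²` divides neither
`a'` nor `b'`, so the `q`-free parts of `a, b` are `g₀a', g₀b'` and get different colours.
Hence `|𝒜| ≤ 2 ^ ω`, and `log 2 < 2 log 3` finishes. -/

open Finset

theorem exists_bool_apply_mul_ne_of_even_orderOf {G : Type*} [CommGroup G] {g : G}
    (hg : Even (orderOf g)) :
    ∃ c : G → Bool, ∀ x, c (g * x) ≠ c x := by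
  classical
  have hrep (x : G) : ∃ k : ℤ, x = (QuotientGroup.mk x : G ⧸ Subgroup.zpowers g).out * g ^ k := by
    obtain ⟨⟨_, m, rfl⟩, hm⟩ := QuotientGroup.mk_out_eq_mul (Subgroup.zpowers g) x
    exact ⟨-m, by rw [hm, zpow_neg, mul_inv_cancel_right]⟩
  choose k hk using hrep
  refine ⟨fun x => decide (Even (k x)), fun x => ?_⟩
  have hcoset : (QuotientGroup.mk (g * x) : G ⧸ Subgroup.zpowers g) = QuotientGroup.mk x := by
    rw [QuotientGroup.eq, mul_comm g, mul_inv_rev, inv_mul_cancel_right]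
    exact inv_mem (Subgroup.mem_zpowers g)
  have hpow : g ^ k (g * x) = g ^ (k x + 1) := by
    have h := hk (g * x)
    rw [hcoset] at h
    rw [← mul_right_inj (QuotientGroup.mk x : G ⧸ Subgroup.zpowers g).out, ← h, zpow_add_one,
      ← mul_assoc, ← hk x, mul_comm]
  have hmod := (zpow_eq_zpow_iff_modEq.mp hpow).of_dvd
    (Int.natCast_dvd_natCast.mpr (even_iff_two_dvd.mp hg))
  simp only [ne_eq, decide_eq_decide, Int.even_iff]
  unfold Int.ModEq at hmod
  omega

theorem exists_bool_ne_of_sq_sub_mul_add_sq_eq_zero {F : Type*} [Field F]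
    (hF : ringChar F ≠ 2) :
    ∃ c : F → Bool, ∀ x y, x ≠ 0 → y ≠ 0 → x ^ 2 - x * y + y ^ 2 = 0 → c x ≠ c y := by
  classical
  by_cases hroot : ∃ ζ : F, ζ ^ 2 - ζ + 1 = 0
  swap
  · push Not at hroot
    refine ⟨fun _ => true, fun x y _ hy hxy => (hroot (x / y) ?_).elim⟩
    field_simp
    linear_combination hxy
  obtain ⟨ζ, hζ⟩ := hroot
  have hζ0 : ζ ≠ 0 := by rintro rfl; norm_num at hζ
  set u := Units.mk0 ζ hζ0
  have hu3 : u ^ 3 = -1 := Units.ext (by simp [u]; linear_combination (ζ + 1) * hζ)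
  have hu : Even (orderOf u) := by
    have hneg : (-1 : Fˣ) ≠ 1 := fun h =>
      Ring.neg_one_ne_one_of_char_ne_two hF (by simpa using congrArg Units.val h)
    rw [← neg_one_pow_eq_one_iff_even hneg, ← hu3, ← pow_mul, mul_comm, pow_mul,
      pow_orderOf_eq_one, one_pow]
  obtain ⟨c, hc⟩ := exists_bool_apply_mul_ne_of_even_orderOf hu
  refine ⟨fun x => if hx : x = 0 then true else c (Units.mk0 x hx), fun x y hx hy hxy => ?_⟩
  -- the roots of `z² - z + 1` are `ζ` and `ζ⁻¹ = 1 - ζ`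
  have hadj : x = ζ * y ∨ y = ζ * x := by
    have : (x - ζ * y) * (x - (1 - ζ) * y) = 0 := by linear_combination hxy - y ^ 2 * hζ
    rcases mul_eq_zero.mp this with h | h
    · exact Or.inl (by linear_combination h)
    · exact Or.inr (by linear_combination (-ζ) * h + y * hζ)
  simp only [dif_neg hx, dif_neg hy]
  rcases hadj with h | h
  · rw [show Units.mk0 x hx = u * Units.mk0 y hy from Units.ext h]
    exact hc _
  · rw [show Units.mk0 y hy = u * Units.mk0 x hx from Units.ext h]
    exact (hc _).symm

theorem ZMod.exists_bool_ne_of_sq_sub_mul_add_sq_eq_zero (p : ℕ) [Fact p.Prime] :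
    ∃ c : ZMod p → Bool, ∀ x y, x ≠ 0 → y ≠ 0 → x ^ 2 - x * y + y ^ 2 = 0 → c x ≠ c y := by
  rcases eq_or_ne p 2 with rfl | hp
  · exact ⟨fun _ => true, by decide +revert⟩
  · exact _root_.exists_bool_ne_of_sq_sub_mul_add_sq_eq_zero
      ((ZMod.ringChar_zmod_n p).trans_ne hp)

theorem Prime.not_dvd_of_dvd_sq_sub_mul_add_sq {R : Type*} [CommRing R] {p a b : R}
    (hp : Prime p) (hab : IsCoprime a b) (h : p ∣ a ^ 2 - a * b + b ^ 2) : ¬ p ∣ a := by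
  intro ha
  have hb : p ∣ b ^ 2 := by
    rw [show b ^ 2 = (a ^ 2 - a * b + b ^ 2) - a * (a - b) by ring]
    exact dvd_sub h (dvd_mul_of_dvd_left ha _)
  exact hp.not_isUnit (hab.isUnit_of_dvd' ha (hp.dvd_of_dvd_pow hb))

theorem Nat.exists_prime_ordCompl_sq_sub_mul_add_sq_eq_zero {a b : ℕ} (ha : a ≠ 0) (hb : b ≠ 0)
    (hab : a ≠ b) :
    ∃ q : ℕ, q.Prime ∧ (q : ℤ) ∣ (a : ℤ) ^ 2 - a * b + b ^ 2 ∧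
      ((ordCompl[q] a : ℕ) : ZMod q) ^ 2 - (ordCompl[q] a : ℕ) * (ordCompl[q] b : ℕ)
        + ((ordCompl[q] b : ℕ) : ZMod q) ^ 2 = 0 := by
  obtain ⟨a', b', hcop, ha', hb'⟩ := Nat.exists_coprime a b
  generalize a.gcd b = g at ha' hb'
  subst ha' hb'
  have hne : a' ≠ b' := fun h => hab (by rw [h])
  have ha'0 : a' ≠ 0 := left_ne_zero_of_mul ha
  have hb'0 : b' ≠ 0 := left_ne_zero_of_mul hb
  have hW : ((a' : ℤ) ^ 2 - a' * b' + b' ^ 2).natAbs ≠ 1 := by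
    have h1 : (1 : ℤ) ≤ a' * b' := by
      norm_cast
      exact Nat.one_le_iff_ne_zero.mpr (mul_ne_zero ha'0 hb'0)
    have h2 : (1 : ℤ) ≤ ((a' : ℤ) - b') ^ 2 := by
      rcases lt_or_gt_of_ne hne with h | h <;> zify at h <;> nlinarith
    have : (a' : ℤ) ^ 2 - a' * b' + b' ^ 2 = (a' - b') ^ 2 + a' * b' := by ring
    omega
  obtain ⟨q, hq, hqW⟩ := Nat.exists_prime_and_dvd hW
  replace hqW : (q : ℤ) ∣ (a' : ℤ) ^ 2 - a' * b' + b' ^ 2 := Int.natCast_dvd.mpr hqW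
  have hqZ : _root_.Prime (q : ℤ) := Nat.prime_iff_prime_int.mp hq
  have hcopZ : IsCoprime (a' : ℤ) b' := Nat.isCoprime_iff_coprime.mpr hcop
  have hqa : ¬ q ∣ a' := fun h =>
    hqZ.not_dvd_of_dvd_sq_sub_mul_add_sq hcopZ hqW (Int.natCast_dvd_natCast.mpr h)
  have hqb : ¬ q ∣ b' := fun h =>
    hqZ.not_dvd_of_dvd_sq_sub_mul_add_sq hcopZ.symm (hqW.trans (dvd_of_eq (by ring)))
      (Int.natCast_dvd_natCast.mpr h)
  have hcompl : ∀ c, ¬ q ∣ c → ordCompl[q] (c * g) = c * ordCompl[q] g := fun c hc => by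
    rw [Nat.ordCompl_mul, (Nat.ordCompl_eq_self_iff_zero_or_not_dvd c hq).mpr (Or.inr hc)]
  refine ⟨q, hq, ?_, ?_⟩
  · exact (hqW.mul_left ((g : ℤ) ^ 2)).trans (dvd_of_eq (by push_cast; ring))
  · have hW0 := (ZMod.intCast_zmod_eq_zero_iff_dvd _ _).mpr hqW
    rw [hcompl a' hqa, hcompl b' hqb]
    push_cast at hW0 ⊢
    linear_combination ((ordCompl[q] g : ℕ) : ZMod q) ^ 2 * hW0

theorem card_le_two_pow_card_primeFactors_prod_offDiag (𝒜 : Finset ℤ) (hpos : ∀ a ∈ 𝒜, 0 < a) :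
    #𝒜 ≤ 2 ^ #(∏ q ∈ 𝒜.offDiag, (q.1 ^ 2 - q.1 * q.2 + q.2 ^ 2)).natAbs.primeFactors := by
  classical
  set P := ∏ q ∈ 𝒜.offDiag, (q.1 ^ 2 - q.1 * q.2 + q.2 ^ 2)
  have hP : P ≠ 0 := prod_ne_zero_iff.mpr fun q hq => by
    obtain ⟨h1, h2, -⟩ := mem_offDiag.mp hq
    nlinarith [mul_pos (hpos _ h1) (hpos _ h2), sq_nonneg (q.1 - q.2)]
  have hcolor (q : P.natAbs.primeFactors) : ∃ c : ZMod q → Bool,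
      ∀ x y, x ≠ 0 → y ≠ 0 → x ^ 2 - x * y + y ^ 2 = 0 → c x ≠ c y :=
    haveI := Fact.mk (Nat.prime_of_mem_primeFactors q.2)
    ZMod.exists_bool_ne_of_sq_sub_mul_add_sq_eq_zero q
  choose C hC using hcolor
  let Φ (a : ℤ) (q : P.natAbs.primeFactors) : Bool := C q (ordCompl[(q : ℕ)] a.natAbs)
  have hΦ : Set.InjOn Φ 𝒜 := by
    intro a ha b hb hab
    by_contra hne
    have hA := Int.natAbs_of_nonneg (hpos a ha).le
    have hB := Int.natAbs_of_nonneg (hpos b hb).le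
    obtain ⟨q, hq, hqab, hzero⟩ := Nat.exists_prime_ordCompl_sq_sub_mul_add_sq_eq_zero
      (Int.natAbs_ne_zero.mpr (hpos a ha).ne') (Int.natAbs_ne_zero.mpr (hpos b hb).ne')
      (fun h => hne (by rw [← hA, ← hB, h]))
    rw [hA, hB] at hqab
    have hqP : q ∈ P.natAbs.primeFactors := Nat.mem_primeFactors.mpr
      ⟨hq, Int.natCast_dvd.mp (hqab.trans (dvd_prod_of_mem
        (fun q : ℤ × ℤ => q.1 ^ 2 - q.1 * q.2 + q.2 ^ 2)
        (mem_offDiag.mpr ⟨ha, hb, hne⟩ : (a, b) ∈ 𝒜.offDiag))), Int.natAbs_ne_zero.mpr hP⟩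
    have hunit {n : ℕ} (hn : n ≠ 0) : (ordCompl[q] n : ZMod q) ≠ 0 :=
      (ZMod.natCast_eq_zero_iff _ _).not.mpr (Nat.not_dvd_ordCompl hq hn)
    exact hC ⟨q, hqP⟩ _ _ (hunit (Int.natAbs_ne_zero.mpr (hpos a ha).ne'))
      (hunit (Int.natAbs_ne_zero.mpr (hpos b hb).ne')) hzero (congrFun hab ⟨q, hqP⟩)
  simpa using card_le_card_of_injOn Φ (fun a _ => mem_univ _) hΦ

theorem Real.log_natCast_le_mul_log_two {n k : ℕ} (h : n ≤ 2 ^ k) :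
    Real.log n ≤ k * Real.log 2 := by
  rcases n.eq_zero_or_pos with rfl | hn
  · simpa using mul_nonneg k.cast_nonneg (Real.log_nonneg one_le_two)
  · rw [← Real.log_pow]
    exact Real.log_le_log (by positivity) (by exact_mod_cast h)

theorem stmt_13_general (𝒜 : Finset ℤ) (hpos : ∀ a ∈ 𝒜, 0 < a) :
    (((∏ q ∈ 𝒜.offDiag, (q.1 ^ 2 - q.1 * q.2 + q.2 ^ 2)).natAbs.primeFactors.card : ℝ)) >
      (Real.log (𝒜.card : ℝ) - Real.log 38) / (2 * Real.log 3) := by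
  have hlog2 : Real.log 2 ≤ 2 * Real.log 3 := calc
    Real.log 2 ≤ Real.log (3 ^ 2) := Real.log_le_log two_pos (by norm_num)
    _ = 2 * Real.log 3 := by simp [Real.log_pow]
  have hcard := (Real.log_natCast_le_mul_log_two
    (card_le_two_pow_card_primeFactors_prod_offDiag 𝒜 hpos)).trans
    (mul_le_mul_of_nonneg_left hlog2 (Nat.cast_nonneg _))
  have hlog3 : 0 < Real.log 3 := Real.log_pos (by norm_num)
  have hlog38 : 0 < Real.log 38 := Real.log_pos (by norm_num)
  rw [gt_iff_lt, div_lt_iff₀ (by positivity)]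
  linarith

theorem stmt_13 (𝒜 : Finset ℤ) (hpos : ∀ a ∈ 𝒜, 0 < a) (hne : 𝒜.Nonempty) :
    (((∏ q ∈ 𝒜.offDiag, (q.1 ^ 2 - q.1 * q.2 + q.2 ^ 2)).natAbs.primeFactors.card : ℝ)) >
      (Real.log (𝒜.card : ℝ) - Real.log 38) / (2 * Real.log 3) :=
  stmt_13_general 𝒜 hpos
end

section
/- If 𝒜 ⊆ ℤ⁺ is a finite nonempty set, then the number of distinct rational primes dividing ∏_{a,b ∈ 𝒜, a ≠ b} (a² + ab + b²) is strictly greater than (log|𝒜| − log 146)/(2·log 3). -/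
/-!
For distinct positive `a = g a'` and `b = g b'` with `a'`, `b'` coprime, `a'² + a'b' + b'²`
exceeds `3` and is not divisible by `9`, so it has a prime factor `p ≠ 3`, which divides neither
`a'` nor `b'`. The `p`-free parts `u`, `v` of `a`, `b` then satisfy `u² + uv + v² ≡ 0 (mod p)`,
hence `u³ ≡ v³` but `u ≢ v`. Colour `a` at `p` by the rank of its `p`-free part modulo `p` among
the at most three residues with the same cube: distinct elements of `𝒜` get different colours at
some prime factor of the product, so `|𝒜| ≤ 3 ^ ω(∏ (a² + ab + b²))`.
-/

open Finset

lemma pow_three_eq_pow_three_of_sq_add_mul_add_sq_eq_zero {R : Type*} [CommRing R] {x y : R}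
    (h : x ^ 2 + x * y + y ^ 2 = 0) : x ^ 3 = y ^ 3 := by
  linear_combination (x - y) * h

lemma ne_of_sq_add_mul_add_sq_eq_zero {R : Type*} [CommRing R] [NoZeroDivisors R] {x y : R}
    (h3 : (3 : R) ≠ 0) (hy : y ≠ 0) (h : x ^ 2 + x * y + y ^ 2 = 0) : x ≠ y := by
  rintro rfl
  have : (3 : R) * x ^ 2 = 0 := by linear_combination h
  simp_all

lemma not_nine_dvd_sq_add_mul_add_sq {a b : ℕ} (hab : a.Coprime b) :
    ¬ 9 ∣ a ^ 2 + a * b + b ^ 2 := by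
  intro h9
  have key : ∀ x y : ZMod 9, x ^ 2 + x * y + y ^ 2 = 0 → 3 * x = 0 ∧ 3 * y = 0 := by decide
  have hF : ((a ^ 2 + a * b + b ^ 2 : ℕ) : ZMod 9) = 0 := (ZMod.natCast_eq_zero_iff _ _).mpr h9
  push_cast at hF
  obtain ⟨ha, hb⟩ := key a b hF
  have h3 : ∀ n : ℕ, (3 * n : ZMod 9) = 0 → 3 ∣ n := fun n hn =>
    Nat.dvd_of_mul_dvd_mul_left (by norm_num : 0 < 3)
      ((ZMod.natCast_eq_zero_iff _ 9).mp (by push_cast; exact hn))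
  have := Nat.dvd_gcd (h3 a ha) (h3 b hb)
  rw [hab] at this
  omega

lemma exists_prime_ne_three_dvd_sq_add_mul_add_sq {a b : ℕ} (ha : 0 < a) (hb : 0 < b)
    (hne : a ≠ b) (hab : a.Coprime b) :
    ∃ p, p.Prime ∧ p ≠ 3 ∧ p ∣ a ^ 2 + a * b + b ^ 2 := by
  by_contra! hcon
  have h7 : 7 ≤ a ^ 2 + a * b + b ^ 2 := by
    rcases Nat.lt_or_gt_of_ne hne with h | h <;> nlinarith
  obtain ⟨k, hk⟩ : ∃ k, a ^ 2 + a * b + b ^ 2 = 3 ^ k :=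
    ⟨_, Nat.eq_prime_pow_of_unique_prime_dvd (by omega)
      fun {d} hd hdF => by_contra fun h => hcon d hd h hdF⟩
  have h2k : 2 ≤ k := by
    by_contra! h
    interval_cases k <;> omega
  exact not_nine_dvd_sq_add_mul_add_sq hab (hk ▸ pow_dvd_pow 3 h2k)

lemma Nat.Prime.not_dvd_left_of_dvd_sq_add_mul_add_sq {p a b : ℕ} (hp : p.Prime)
    (hab : a.Coprime b) (hF : p ∣ a ^ 2 + a * b + b ^ 2) : ¬ p ∣ a := by
  intro hpa
  have hpb : p ∣ b := by
    refine hp.dvd_of_dvd_pow (n := 2) ((Nat.dvd_add_right (hpa.mul_right (a + b))).mp ?_)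
    convert hF using 1; ring
  exact hp.one_lt.ne' (Nat.eq_one_of_dvd_one (hab ▸ Nat.dvd_gcd hpa hpb))

lemma exists_prime_ne_three_dvd_sq_add_mul_add_sq_ordCompl {a b : ℕ} (ha : 0 < a) (hb : 0 < b)
    (hne : a ≠ b) :
    ∃ p, p.Prime ∧ p ≠ 3 ∧ p ∣ a ^ 2 + a * b + b ^ 2 ∧
      p ∣ (ordCompl[p] a) ^ 2 + ordCompl[p] a * ordCompl[p] b + (ordCompl[p] b) ^ 2 := by
  obtain ⟨g, a', b', -, hab', rfl, rfl⟩ := Nat.exists_coprime' (Nat.gcd_pos_of_pos_left b ha)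
  have ha' : 0 < a' := Nat.pos_of_mul_pos_right ha
  have hb' : 0 < b' := Nat.pos_of_mul_pos_right hb
  obtain ⟨p, hp, hp3, hpF⟩ :=
    exists_prime_ne_three_dvd_sq_add_mul_add_sq ha' hb' (fun h => hne (h ▸ rfl)) hab'
  have hpF' : p ∣ b' ^ 2 + b' * a' + a' ^ 2 := by convert hpF using 1; ring
  have hca : ordCompl[p] (a' * g) = a' * ordCompl[p] g := by
    rw [Nat.ordCompl_mul, (Nat.ordCompl_eq_self_iff_zero_or_not_dvd a' hp).mpr
      (Or.inr (hp.not_dvd_left_of_dvd_sq_add_mul_add_sq hab' hpF))]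
  have hcb : ordCompl[p] (b' * g) = b' * ordCompl[p] g := by
    rw [Nat.ordCompl_mul, (Nat.ordCompl_eq_self_iff_zero_or_not_dvd b' hp).mpr
      (Or.inr (hp.not_dvd_left_of_dvd_sq_add_mul_add_sq hab'.symm hpF'))]
  refine ⟨p, hp, hp3, hpF.trans ⟨g ^ 2, by ring⟩, ?_⟩
  rw [hca, hcb]
  exact hpF.trans ⟨(ordCompl[p] g) ^ 2, by ring⟩

def cubeRank (p x : ℕ) : ℕ := #{z ∈ range x | ((z : ℕ) : ZMod p) ^ 3 = (x : ZMod p) ^ 3}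

lemma cubeRank_lt_cubeRank {p x y : ℕ} (hxy : x < y) (h : (x : ZMod p) ^ 3 = (y : ZMod p) ^ 3) :
    cubeRank p x < cubeRank p y := by
  refine card_lt_card ((ssubset_iff_of_subset ?_).mpr ⟨x, ?_, ?_⟩)
  · intro z
    simp only [mem_filter, mem_range]
    exact fun ⟨hzx, hz⟩ => ⟨hzx.trans hxy, hz.trans h⟩
  · simp [hxy, h]
  · simp

lemma cubeRank_lt_three {p x : ℕ} (hp : p.Prime) (hx : x < p) : cubeRank p x < 3 := by
  have := Fact.mk hp
  classical
  set roots := Polynomial.nthRootsFinset 3 ((x : ZMod p) ^ 3)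
  set below : Finset ℕ := {z ∈ range x | ((z : ℕ) : ZMod p) ^ 3 = (x : ZMod p) ^ 3}
  have hcast : ∀ z ∈ below, ∀ w, w ≤ x → (z : ZMod p) = w → z = w := fun z hz w hw h => by
    simpa [ZMod.val_cast_of_lt ((mem_range.mp (mem_filter.mp hz).1).trans hx),
      ZMod.val_cast_of_lt (hw.trans_lt hx)] using congrArg ZMod.val h
  have hmaps : Set.MapsTo (Nat.cast : ℕ → ZMod p) below (roots.erase x) := fun z hz => by
    have hzx : (z : ZMod p) ≠ x := fun h =>
      (mem_range.mp (mem_filter.mp hz).1).ne (hcast z hz x le_rfl h)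
    simp [roots, hzx, (mem_filter.mp hz).2]
  have hinj : Set.InjOn (Nat.cast : ℕ → ZMod p) below := fun z hz w hw h =>
    hcast z hz w (mem_range.mp (mem_filter.mp hw).1).le h
  have hroots : #roots ≤ 3 := by
    rw [show roots = _ from Polynomial.nthRootsFinset_def 3 _]
    exact (Multiset.toFinset_card_le _).trans (Polynomial.card_nthRoots 3 _)
  have := card_le_card_of_injOn _ hmaps hinj
  rw [card_erase_of_mem (by simp [roots])] at this
  exact this.trans_lt (by omega)

def cubeColor (p a : ℕ) : ℕ := cubeRank p (ordCompl[p] a % p)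

lemma cubeColor_lt_three {p : ℕ} (hp : p.Prime) (a : ℕ) : cubeColor p a < 3 :=
  cubeRank_lt_three hp (Nat.mod_lt _ hp.pos)

lemma cubeColor_ne_cubeColor {p a b : ℕ} (hp : p.Prime) (hp3 : p ≠ 3) (hb : b ≠ 0)
    (hF : p ∣ (ordCompl[p] a) ^ 2 + ordCompl[p] a * ordCompl[p] b + (ordCompl[p] b) ^ 2) :
    cubeColor p a ≠ cubeColor p b := by
  have := Fact.mk hp
  set x := ordCompl[p] a % p
  set y := ordCompl[p] b % p
  have hF' : (x : ZMod p) ^ 2 + x * y + y ^ 2 = 0 := by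
    simpa [x, y, ZMod.natCast_mod] using (ZMod.natCast_eq_zero_iff _ _).mpr hF
  have h3 : (3 : ZMod p) ≠ 0 := by
    exact_mod_cast fun h => hp3 ((Nat.prime_dvd_prime_iff_eq hp Nat.prime_three).mp
      ((ZMod.natCast_eq_zero_iff 3 p).mp h))
  have hy : (y : ZMod p) ≠ 0 := by
    simpa [y, ZMod.natCast_mod, ZMod.natCast_eq_zero_iff] using Nat.not_dvd_ordCompl hp hb
  have hxy : x ≠ y := fun h => ne_of_sq_add_mul_add_sq_eq_zero h3 hy hF' (congrArg _ h)
  have hcube := pow_three_eq_pow_three_of_sq_add_mul_add_sq_eq_zero hF'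
  rcases Nat.lt_or_gt_of_ne hxy with h | h
  · exact (cubeRank_lt_cubeRank h hcube).ne
  · exact (cubeRank_lt_cubeRank h hcube.symm).ne'

lemma exists_prime_dvd_sq_add_mul_add_sq_cubeColor_ne {a b : ℕ} (ha : 0 < a) (hb : 0 < b)
    (hne : a ≠ b) :
    ∃ p, p.Prime ∧ p ∣ a ^ 2 + a * b + b ^ 2 ∧ cubeColor p a ≠ cubeColor p b := by
  obtain ⟨p, hp, hp3, hpF, hpF'⟩ := exists_prime_ne_three_dvd_sq_add_mul_add_sq_ordCompl ha hb hne
  exact ⟨p, hp, hpF, cubeColor_ne_cubeColor hp hp3 hb.ne' hpF'⟩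

lemma Finset.card_le_pow_card_of_separating {α ι : Type*} {s : Finset α} {T : Finset ι} {k : ℕ}
    (c : ι → α → ℕ) (hc : ∀ i ∈ T, ∀ a, c i a < k)
    (hsep : ∀ a ∈ s, ∀ b ∈ s, a ≠ b → ∃ i ∈ T, c i a ≠ c i b) : #s ≤ k ^ #T := by
  classical
  let code (a : α) : T → Fin k := fun i => ⟨c i a, hc i i.2 a⟩
  have hinj : Set.InjOn code s := fun a ha b hb h => by
    by_contra hab
    obtain ⟨i, hi, hci⟩ := hsep a ha b hb hab
    exact hci (congrArg Fin.val (congrFun h ⟨i, hi⟩))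
  calc #s ≤ #(univ : Finset (T → Fin k)) := card_le_card_of_injOn code (by simp) hinj
    _ = k ^ #T := by simp

lemma Real.log_natCast_le_mul_log_of_le_pow {n b m : ℕ} (h : n ≤ b ^ m) :
    Real.log n ≤ m * Real.log b := by
  rcases n.eq_zero_or_pos with rfl | hn
  · simp only [Nat.cast_zero, Real.log_zero]
    exact mul_nonneg m.cast_nonneg (Real.log_natCast_nonneg b)
  · rw [← Real.log_pow]
    exact Real.log_le_log (by exact_mod_cast hn) (by exact_mod_cast h)

theorem stmt_14_general (𝒜 : Finset ℕ) (hpos : ∀ a ∈ 𝒜, 0 < a) :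
    (((∏ q ∈ 𝒜.offDiag, (q.1 ^ 2 + q.1 * q.2 + q.2 ^ 2)).primeFactors.card : ℝ)) >
      (Real.log (𝒜.card : ℝ) - Real.log 146) / (2 * Real.log 3) := by
  set P := ∏ q ∈ 𝒜.offDiag, (q.1 ^ 2 + q.1 * q.2 + q.2 ^ 2)
  have hP : P ≠ 0 := prod_ne_zero_iff.mpr fun q hq => by
    have := hpos q.1 (mem_offDiag.mp hq).1
    positivity
  have hcard : #𝒜 ≤ 3 ^ #P.primeFactors :=
    card_le_pow_card_of_separating cubeColor
      (fun p hp => cubeColor_lt_three (Nat.prime_of_mem_primeFactors hp))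
      fun a ha b hb hab => by
        obtain ⟨p, hp, hpF, hc⟩ :=
          exists_prime_dvd_sq_add_mul_add_sq_cubeColor_ne (hpos a ha) (hpos b hb) hab
        refine ⟨p, Nat.mem_primeFactors.mpr ⟨hp, hpF.trans ?_, hP⟩, hc⟩
        exact dvd_prod_of_mem (fun q : ℕ × ℕ => q.1 ^ 2 + q.1 * q.2 + q.2 ^ 2)
          (mem_offDiag (x := (a, b)) |>.mpr ⟨ha, hb, hab⟩)
  have hlog := Real.log_natCast_le_mul_log_of_le_pow hcard
  have hlog3 : 0 < Real.log 3 := Real.log_pos (by norm_num)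
  have hlog146 : 0 < Real.log 146 := Real.log_pos (by norm_num)
  rw [gt_iff_lt, div_lt_iff₀ (by positivity)]
  push_cast at hlog
  linarith [mul_nonneg (#P.primeFactors).cast_nonneg hlog3.le]

theorem stmt_14 (𝒜 : Finset ℕ) (hpos : ∀ a ∈ 𝒜, 0 < a) (hne : 𝒜.Nonempty) :
    (((∏ q ∈ 𝒜.offDiag, (q.1 ^ 2 + q.1 * q.2 + q.2 ^ 2)).primeFactors.card : ℝ)) >
      (Real.log (𝒜.card : ℝ) - Real.log 146) / (2 * Real.log 3) :=
  stmt_14_general 𝒜 hpos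
end

section
/- Let E = ℤ[ω], θ ∈ E a prime, and γ a positive integer; set ρ = −θ^γ. For any finite set 𝒜 ⊆ E there exists ℬ ⊆ 𝒜 with |ℬ| ≥ |𝒜|/2 such that for all distinct a, b ∈ ℬ and every natural number k: if θ^k divides a + ρb (= a − θ^γ b), then θ^{k−γ} divides both a and b. -/
open Finset

section

variable {R : Type*} [CommRing R] {p a b : R} {k : ℕ}

theorem pow_dvd_of_pow_dvd_add_of_emultiplicity_ne (h : emultiplicity p a ≠ emultiplicity p b)
    (hk : p ^ k ∣ a + b) : p ^ k ∣ a ∧ p ^ k ∣ b := by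
  rw [pow_dvd_iff_le_emultiplicity, emultiplicity_add_eq_min h, le_min_iff] at hk
  exact ⟨pow_dvd_of_le_emultiplicity hk.1, pow_dvd_of_le_emultiplicity hk.2⟩

variable [IsDomain R]

theorem emultiplicity_neg_pow_mul (hp : Prime p) (γ : ℕ) (b : R) :
    emultiplicity p (-p ^ γ * b) = γ + emultiplicity p b := by
  rw [neg_mul, emultiplicity_neg, emultiplicity_mul hp, emultiplicity_pow_self_of_prime hp]

theorem pow_sub_dvd_of_pow_dvd_neg_pow_mul (hp : Prime p) {γ : ℕ} (hk : p ^ k ∣ -p ^ γ * b) :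
    p ^ (k - γ) ∣ b := by
  rw [pow_dvd_iff_le_emultiplicity, emultiplicity_neg_pow_mul hp] at hk
  apply pow_dvd_of_le_emultiplicity
  rw [ENat.natCast_sub, tsub_le_iff_left]
  exact hk

theorem Nat.div_mod_two_ne_of_eq_add {m n γ : ℕ} (hγ : 0 < γ) (h : m = γ + n) :
    m / γ % 2 ≠ n / γ % 2 := by
  rw [h, Nat.add_div_left _ hγ]
  omega

/-- The parity of `⌊v_p(a) / γ⌋`; `multiplicity p 0` is the junk value `0`. -/
noncomputable def blockParity (p : R) (γ : ℕ) (a : R) : ℕ := multiplicity p a / γ % 2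

theorem emultiplicity_ne_emultiplicity_neg_pow_mul [WfDvdMonoid R] (hp : Prime p) {γ : ℕ}
    (hγ : 0 < γ) (hab : a ≠ b) (hpar : blockParity p γ a = blockParity p γ b) :
    emultiplicity p a ≠ emultiplicity p (-p ^ γ * b) := by
  have hfin {x : R} (hx : x ≠ 0) : FiniteMultiplicity p x :=
    FiniteMultiplicity.of_not_isUnit hp.not_isUnit hx
  rw [emultiplicity_neg_pow_mul hp]
  intro h
  rcases eq_or_ne b 0 with rfl | hb
  · rw [emultiplicity_zero, add_top, emultiplicity_eq_top] at h
    exact h (hfin hab)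
  rw [(hfin hb).emultiplicity_eq_multiplicity] at h
  have ha : a ≠ 0 := by
    rintro rfl
    rw [emultiplicity_zero, ← Nat.cast_add] at h
    exact ENat.top_ne_natCast _ h
  rw [(hfin ha).emultiplicity_eq_multiplicity] at h
  exact Nat.div_mod_two_ne_of_eq_add hγ (by exact_mod_cast h) hpar

end

theorem stmt_19 (θ : E) (hθ : Prime θ) (γ : ℕ) (hγ : 0 < γ) (𝒜 : Finset E) :
    ∃ ℬ ⊆ 𝒜, (𝒜.card : ℝ) / 2 ≤ (ℬ.card : ℝ) ∧
      ∀ a ∈ ℬ, ∀ b ∈ ℬ, a ≠ b → ∀ k : ℕ,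
        θ ^ k ∣ a + (-θ ^ γ) * b → θ ^ (k - γ) ∣ a ∧ θ ^ (k - γ) ∣ b := by
  have : IsNoetherianRing E := is_noetherian_subring_closure _ (Set.finite_singleton ω)
  obtain ⟨i, -, hi⟩ := exists_le_card_fiber_of_nsmul_le_card_of_maps_to (s := 𝒜) (t := range 2)
    (f := blockParity θ γ) (b := (𝒜.card : ℝ) / 2)
    (fun a _ => mem_range.2 (Nat.mod_lt _ two_pos)) ⟨0, by simp⟩ (by simp [mul_div_cancel₀])
  refine ⟨_, filter_subset _ _, hi, fun a ha b hb hab k hk => ?_⟩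
  rw [mem_filter] at ha hb
  obtain ⟨hka, hkb⟩ := pow_dvd_of_pow_dvd_add_of_emultiplicity_ne
    (emultiplicity_ne_emultiplicity_neg_pow_mul hθ hγ hab (ha.2.trans hb.2.symm)) hk
  exact ⟨(pow_dvd_pow θ (Nat.sub_le k γ)).trans hka, pow_sub_dvd_of_pow_dvd_neg_pow_mul hθ hkb⟩
end
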